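/- Let c₀ = ∫_{-∞}^{∞} (1+t²)^{-5/4} dt, let G(x) = ∫₀ˣ (1+t²)^{-5/4} dt with inverse G⁻¹ : (−c₀/2, c₀/2) → ℝ, and define U₀'(x) = G⁻¹(c₀/2 − c₀ x) for x ∈ (0, 1/2]. Then the arclength of the graph of U₀ over [0,1/2] satisfies ∫₀^{1/2} √(1 + U₀'(x)²) dx = (1/(2c₀)) ∫_{-∞}^{∞} (1+t²)^{-3/4} dt. -/

import Mathlib

/-!
Substitute `x = (c₀/2 - G u)/c₀`, i.e. `u = G⁻¹(c₀/2 - c₀ x)`: it maps `u ∈ (0, ∞)` decreasingly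
onto `x ∈ (0, 1/2)` with `|dx/du| = (1+u²)^{-5/4}/c₀`, and turns the integrand into `√(1+u²)`.
Since `(1+u²)^{-5/4} √(1+u²) = (1+u²)^{-3/4}` is even, the result is `1/c₀` times half the
integral over `ℝ`; the same evenness gives `c₀ = 2 ∫₀^∞ (1+t²)^{-5/4}`, which is what makes the
image of the substitution exactly `(0, 1/2)`.
-/

open Real MeasureTheory

/-- `G x = ∫₀ˣ (1+t²)^{-5/4} dt`. -/
noncomputable def G (x : ℝ) : ℝ := ∫ t in (0:ℝ)..x, (1 + t ^ 2) ^ (-(5:ℝ)/4)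

/-- `c₀ = ∫_ℝ (1+t²)^{-5/4} dt`. -/
noncomputable def c₀ : ℝ := ∫ t : ℝ, (1 + t ^ 2) ^ (-(5:ℝ)/4)

/-- The inverse of `G` (a strictly increasing bijection of `ℝ` onto `(-c₀/2, c₀/2)`). -/
noncomputable def Ginv : ℝ → ℝ := Function.invFun G

open Set Filter Topology

noncomputable def primitive (f : ℝ → ℝ) (x : ℝ) : ℝ := ∫ t in (0:ℝ)..x, f t

section Primitive

variable {f : ℝ → ℝ}

@[simp] lemma primitive_zero : primitive f 0 = 0 := intervalIntegral.integral_same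

lemma hasDerivAt_primitive (hf : Continuous f) (x : ℝ) : HasDerivAt (primitive f) (f x) x :=
  intervalIntegral.integral_hasDerivAt_right (hf.intervalIntegrable _ _)
    (hf.stronglyMeasurableAtFilter _ _) hf.continuousAt

lemma continuous_primitive (hf : Continuous f) : Continuous (primitive f) :=
  continuous_iff_continuousAt.2 fun x => (hasDerivAt_primitive hf x).continuousAt

lemma strictMono_primitive (hf : Continuous f) (hpos : ∀ x, 0 < f x) :
    StrictMono (primitive f) :=
  strictMono_of_hasDerivAt_pos (hasDerivAt_primitive hf) hpos

lemma tendsto_primitive_atTop (hint : IntegrableOn f (Ioi 0)) :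
    Tendsto (primitive f) atTop (𝓝 (∫ t in Ioi 0, f t)) :=
  intervalIntegral_tendsto_integral_Ioi 0 hint tendsto_id

lemma primitive_lt_integral_Ioi (hf : Continuous f) (hpos : ∀ x, 0 < f x)
    (hint : IntegrableOn f (Ioi 0)) (x : ℝ) : primitive f x < ∫ t in Ioi 0, f t :=
  (strictMono_primitive hf hpos (lt_add_one x)).trans_le <|
    (strictMono_primitive hf hpos).monotone.ge_of_tendsto (tendsto_primitive_atTop hint) _

lemma image_primitive_Ioi (hf : Continuous f) (hpos : ∀ x, 0 < f x)
    (hint : IntegrableOn f (Ioi 0)) :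
    primitive f '' Ioi 0 = Ioo 0 (∫ t in Ioi 0, f t) := by
  refine Subset.antisymm ?_ ?_
  · rintro _ ⟨x, hx, rfl⟩
    exact ⟨primitive_zero (f := f) ▸ strictMono_primitive hf hpos hx,
      primitive_lt_integral_Ioi hf hpos hint x⟩
  · have hcont := continuous_primitive hf
    have h0 : Tendsto (primitive f) (𝓝[>] 0) (𝓝 0) := by
      simpa using (hcont.tendsto 0).mono_left nhdsWithin_le_nhds
    exact isPreconnected_Ioi.intermediate_value_Ioo (l₁ := 𝓝[>] 0) inf_le_right
      (le_principal_iff.2 (Ioi_mem_atTop 0)) hcont.continuousOn h0 (tendsto_primitive_atTop hint)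

end Primitive

theorem setIntegral_Ioo_comp_invFun_primitive {f : ℝ → ℝ} (hf : Continuous f)
    (hpos : ∀ x, 0 < f x) (hint : IntegrableOn f (Ioi 0)) {c : ℝ}
    (hc : 2 * ∫ t in Ioi 0, f t = c) (g : ℝ → ℝ) :
    ∫ x in Ioo 0 (1/2), g (Function.invFun (primitive f) (c / 2 - c * x))
      = c⁻¹ * ∫ u in Ioi 0, f u * g u := by
  have hc_pos : 0 < c := by
    have := primitive_lt_integral_Ioi hf hpos hint 0
    rw [primitive_zero] at this
    linarith
  set φ : ℝ → ℝ := fun u => (c / 2 - primitive f u) / c with hφ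
  have hφ_image : φ '' Ioi 0 = Ioo 0 (1/2) := by
    rw [hφ, ← Function.comp_def (fun y => (c / 2 - y) / c), image_comp,
      image_primitive_Ioi hf hpos hint, show ∫ t in Ioi 0, f t = c / 2 by linarith]
    ext x
    constructor
    · rintro ⟨y, ⟨hy₀, hy₁⟩, rfl⟩
      constructor
      · exact div_pos (by linarith) hc_pos
      · rw [div_lt_iff₀ hc_pos]; linarith
    · rintro ⟨hx₀, hx₁⟩
      refine ⟨c / 2 - c * x, ⟨by nlinarith, by nlinarith⟩, ?_⟩
      field_simp
      ring
  have hφ_deriv (u : ℝ) : HasDerivAt φ (-f u / c) u :=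
    ((hasDerivAt_primitive hf u).const_sub (c / 2)).div_const c
  have hφ_anti : StrictAnti φ := fun a b hab => by
    have := strictMono_primitive hf hpos hab
    simp only [hφ]
    gcongr
  have hφ_inv (u : ℝ) : Function.invFun (primitive f) (c / 2 - c * φ u) = u := by
    rw [show c / 2 - c * φ u = primitive f u by simp only [hφ]; field_simp; ring]
    exact Function.leftInverse_invFun (strictMono_primitive hf hpos).injective u
  rw [← hφ_image, integral_image_eq_integral_abs_deriv_smul measurableSet_Ioi
    (fun u _ => (hφ_deriv u).hasDerivWithinAt) hφ_anti.injective.injOn, ← integral_const_mul]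
  refine setIntegral_congr_fun measurableSet_Ioi fun u _ => ?_
  rw [hφ_inv, abs_div, abs_neg, abs_of_pos (hpos u), abs_of_pos hc_pos, smul_eq_mul]
  ring

lemma continuous_one_add_sq_rpow (p : ℝ) : Continuous fun t : ℝ => (1 + t ^ 2) ^ p :=
  (continuous_const.add (continuous_pow 2)).rpow_const fun t =>
    Or.inl (by positivity : (0:ℝ) < 1 + t ^ 2).ne'

lemma integrable_one_add_sq_rpow {p : ℝ} (hp : p < -1/2) :
    Integrable fun t : ℝ => (1 + t ^ 2) ^ p := by
  have h := integrable_rpow_neg_one_add_norm_sq (E := ℝ) (μ := volume) (r := -2 * p)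
    (by rw [Module.finrank_self, Nat.cast_one]; linarith)
  simpa [Real.norm_eq_abs, sq_abs] using h

lemma integral_one_add_sq_rpow (p : ℝ) :
    ∫ t : ℝ, (1 + t ^ 2) ^ p = 2 * ∫ t in Ioi 0, (1 + t ^ 2) ^ p := by
  rw [← integral_comp_abs (f := fun t : ℝ => (1 + t ^ 2) ^ p)]
  simp_rw [sq_abs]

lemma one_add_sq_rpow_mul_sqrt (t p : ℝ) :
    (1 + t ^ 2) ^ p * √(1 + t ^ 2) = (1 + t ^ 2) ^ (p + 1/2) := by
  rw [sqrt_eq_rpow, rpow_add (by positivity)]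

/-- The arclength of the singular limit graph `U₀`, whose derivative is
`U₀'(x) = G⁻¹(c₀/2 − c₀ x)` on `(0,1/2]`:
`∫₀^{1/2} √(1 + U₀'(x)²) dx = (1/(2c₀)) ∫_ℝ (1+t²)^{-3/4} dt`. -/
theorem stmt_17 :
    (∫ x in (0:ℝ)..(1/2), Real.sqrt (1 + Ginv (c₀ / 2 - c₀ * x) ^ 2))
      = (1 / (2 * c₀)) * ∫ t : ℝ, (1 + t ^ 2) ^ (-(3:ℝ)/4) := by
  -- `G` is `primitive` of the integrand of `c₀` by definition, so the substitution lemma applies.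
  have hsubst := setIntegral_Ioo_comp_invFun_primitive (continuous_one_add_sq_rpow _)
    (fun t => by positivity)
    (integrable_one_add_sq_rpow (p := -(5:ℝ)/4) (by norm_num)).integrableOn
    (c := c₀) (integral_one_add_sq_rpow _).symm fun u => √(1 + u ^ 2)
  rw [intervalIntegral.integral_of_le (by norm_num), integral_Ioc_eq_integral_Ioo]
  refine hsubst.trans ?_
  rw [integral_one_add_sq_rpow, show -(3:ℝ)/4 = -(5:ℝ)/4 + 1/2 by norm_num]
  simp_rw [one_add_sq_rpow_mul_sqrt]
  ring
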